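/- The explicit 3D profile W̄ solves the stationary 3D self-similar Burgers equation: Let W̄ : ℝ³ → ℝ be defined by W̄(y) = B(y̌)^{−1/2} W₁d( B(y̌)^{3/2} y₁ ), where y̌ = (y₂,y₃) and B(y̌) = 1/(1 + y₂² + y₃²). Then W̄ is C^∞ on ℝ³ and for every y ∈ ℝ³ it satisfies −(1/2)W̄(y) + ( (3/2)y₁ + W̄(y) ) ∂_{y₁}W̄(y) + (1/2)y₂ ∂_{y₂}W̄(y) + (1/2)y₃ ∂_{y₃}W̄(y) = 0. -/

import Mathlib

/-! `W1d y` is Cardano's formula for the real root of `w³ + w + y = 0`, so after rescaling `W̄(y)`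
is the real root of `W³ + (1 + y₂² + y₃²) W + y₁ = 0`. Differentiating this relation gives
`(3W̄² + 1 + y₂² + y₃²) ∇W̄ = -(e₁ + 2 W̄ (0, y₂, y₃))`, and with these partial derivatives the
left-hand side of the Burgers equation is `-3/2` times the cubic divided by `3W̄² + 1 + y₂² + y₃²`. -/

noncomputable section

/-- Points of self-similar space `ℝ³`. -/
abbrev V3 : Type := Fin 3 → ℝ

/-- Spatial partial derivative `∂ⱼ g` of a scalar function on `ℝ³`. -/
def pdS (j : Fin 3) (g : V3 → ℝ) (x : V3) : ℝ :=
  fderiv ℝ g x (Pi.single j 1 : V3)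

/-- The stable self-similar profile of the 1D Burgers equation. -/
def W1d (y : ℝ) : ℝ :=
  (-y / 2 + Real.sqrt (1 / 27 + y ^ 2 / 4)) ^ ((1 : ℝ) / 3)
    - (y / 2 + Real.sqrt (1 / 27 + y ^ 2 / 4)) ^ ((1 : ℝ) / 3)

/-- `B(y̌) = 1/(1 + y₂² + y₃²)`. -/
def Bf (y : V3) : ℝ := 1 / (1 + y 1 ^ 2 + y 2 ^ 2)

/-- The explicit 3D self-similar Burgers profile
`W̄(y) = B(y̌)^{−1/2} W₁d(B(y̌)^{3/2} y₁)`. -/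
def Wbar (y : V3) : ℝ :=
  Bf y ^ (-(1 : ℝ) / 2) * W1d (Bf y ^ ((3 : ℝ) / 2) * y 0)

lemma cardano_radicand_pos (y : ℝ) : 0 < -y / 2 + √(1 / 27 + y ^ 2 / 4) := by
  have hs := Real.sq_sqrt (by positivity : (0 : ℝ) ≤ 1 / 27 + y ^ 2 / 4)
  nlinarith [Real.sqrt_nonneg (1 / 27 + y ^ 2 / 4), sq_nonneg (√(1 / 27 + y ^ 2 / 4) + y / 2)]

lemma W1d_cubic (y : ℝ) : W1d y ^ 3 + W1d y + y = 0 := by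
  have hu := cardano_radicand_pos y
  have hv : 0 < y / 2 + √(1 / 27 + y ^ 2 / 4) := by simpa using cardano_radicand_pos (-y)
  have hs := Real.sq_sqrt (by positivity : (0 : ℝ) ≤ 1 / 27 + y ^ 2 / 4)
  set s := √(1 / 27 + y ^ 2 / 4)
  have cube (x : ℝ) (hx : 0 ≤ x) : (x ^ ((1 : ℝ) / 3)) ^ 3 = x := by
    rw [one_div]; exact_mod_cast Real.rpow_inv_natCast_pow hx three_ne_zero
  have hprod : (-y / 2 + s) ^ ((1 : ℝ) / 3) * (y / 2 + s) ^ ((1 : ℝ) / 3) = 1 / 3 := by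
    rw [← Real.mul_rpow hu.le hv.le, show (-y / 2 + s) * (y / 2 + s) = (1 / 3) ^ 3 by nlinarith,
      one_div 3, ← Nat.cast_ofNat, Real.pow_rpow_inv_natCast (by norm_num) three_ne_zero]
  have ha := cube _ hu.le
  have hb := cube _ hv.le
  set a := (-y / 2 + s) ^ ((1 : ℝ) / 3)
  set b := (y / 2 + s) ^ ((1 : ℝ) / 3)
  show (a - b) ^ 3 + (a - b) + y = 0
  linear_combination ha - hb - 3 * (a - b) * hprod

lemma contDiff_W1d : ContDiff ℝ (⊤ : ℕ∞) W1d := by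
  have hsqrt : ContDiff ℝ (⊤ : ℕ∞) fun y : ℝ => √(1 / 27 + y ^ 2 / 4) :=
    ContDiff.sqrt (by fun_prop) fun y => by positivity
  refine ContDiff.sub ?_ ?_ <;> refine ContDiff.rpow_const_of_ne (by fun_prop) fun y => ?_
  · exact (cardano_radicand_pos y).ne'
  · simpa using (cardano_radicand_pos (-y)).ne'

lemma Wbar_eq_sqrt_mul_W1d (y : V3) :
    Wbar y = √(1 + y 1 ^ 2 + y 2 ^ 2) * W1d (y 0 / √(1 + y 1 ^ 2 + y 2 ^ 2) ^ 3) := by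
  have hr : 0 ≤ 1 + y 1 ^ 2 + y 2 ^ 2 := by positivity
  have hB : Bf y = (√(1 + y 1 ^ 2 + y 2 ^ 2) ^ 2)⁻¹ := by rw [Real.sq_sqrt hr, Bf, one_div]
  rw [Wbar, hB, Real.inv_rpow (by positivity), Real.inv_rpow (by positivity),
    ← Real.rpow_natCast_mul (Real.sqrt_nonneg _), ← Real.rpow_natCast_mul (Real.sqrt_nonneg _)]
  norm_num [div_eq_mul_inv, mul_comm, Real.rpow_neg_one]

lemma Wbar_cubic (y : V3) : Wbar y ^ 3 + (1 + y 1 ^ 2 + y 2 ^ 2) * Wbar y + y 0 = 0 := by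
  have hs : 0 < √(1 + y 1 ^ 2 + y 2 ^ 2) := Real.sqrt_pos.mpr (by positivity)
  have hcub := W1d_cubic (y 0 / √(1 + y 1 ^ 2 + y 2 ^ 2) ^ 3)
  have hr := Real.sq_sqrt (by positivity : 0 ≤ 1 + y 1 ^ 2 + y 2 ^ 2)
  rw [Wbar_eq_sqrt_mul_W1d]
  set s := √(1 + y 1 ^ 2 + y 2 ^ 2)
  rw [← hr]
  field_simp at hcub
  linear_combination hcub

lemma contDiff_Wbar : ContDiff ℝ (⊤ : ℕ∞) Wbar := by
  have hs : ContDiff ℝ (⊤ : ℕ∞) fun y : V3 => √(1 + y 1 ^ 2 + y 2 ^ 2) :=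
    ContDiff.sqrt (by fun_prop) fun y => by positivity
  have hs0 (y : V3) : √(1 + y 1 ^ 2 + y 2 ^ 2) ^ 3 ≠ 0 := by positivity
  rw [funext Wbar_eq_sqrt_mul_W1d]
  exact hs.mul (contDiff_W1d.comp ((contDiff_apply ℝ ℝ 0).div (hs.pow 3) hs0))

lemma HasFDerivAt.cubic_relation {E : Type*} [NormedAddCommGroup E] [NormedSpace ℝ E]
    {f p q : E → ℝ} {f' p' q' : E →L[ℝ] ℝ} {y : E} (hf : HasFDerivAt f f' y)
    (hp : HasFDerivAt p p' y) (hq : HasFDerivAt q q' y)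
    (hrel : ∀ z, f z ^ 3 + p z * f z + q z = 0) (v : E) :
    (3 * f y ^ 2 + p y) * f' v + p' v * f y + q' v = 0 := by
  have hderiv := ((hf.pow 3).add (hp.mul hf)).add hq
  rw [show (fun z => f z ^ 3) + p * f + q = 0 from funext hrel] at hderiv
  have hv := congrArg (· v) (hderiv.unique (hasFDerivAt_const 0 y))
  norm_num at hv
  linear_combination hv

lemma fderiv_Wbar_apply (y v : V3) :
    (3 * Wbar y ^ 2 + (1 + y 1 ^ 2 + y 2 ^ 2)) * fderiv ℝ Wbar y v
      = -(v 0 + 2 * (y 1 * v 1 + y 2 * v 2) * Wbar y) := by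
  have hW := (contDiff_Wbar.differentiable (by simp) y).hasFDerivAt
  have hp := ((hasFDerivAt_const (1 : ℝ) y).add ((hasFDerivAt_apply (𝕜 := ℝ) 1 y).pow 2)).add
    ((hasFDerivAt_apply (𝕜 := ℝ) 2 y).pow 2)
  have h := hW.cubic_relation hp (hasFDerivAt_apply (𝕜 := ℝ) 0 y) Wbar_cubic v
  norm_num at h
  linear_combination h

/-- The explicit profile `W̄` is `C^∞` and solves the stationary 3D self-similar Burgers
equation `−(1/2)W̄ + ((3/2)y₁ + W̄)∂₁W̄ + (1/2)y₂∂₂W̄ + (1/2)y₃∂₃W̄ = 0`. -/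
theorem Wbar_solves_selfsimilar_burgers :
    ContDiff ℝ (⊤ : ℕ∞) Wbar ∧
      ∀ y : V3,
        -(1 / 2) * Wbar y + (3 / 2 * y 0 + Wbar y) * pdS 0 Wbar y
          + 1 / 2 * y 1 * pdS 1 Wbar y + 1 / 2 * y 2 * pdS 2 Wbar y = 0 := by
  refine ⟨contDiff_Wbar, fun y => ?_⟩
  have hD : 3 * Wbar y ^ 2 + (1 + y 1 ^ 2 + y 2 ^ 2) ≠ 0 := by positivity
  have h0 := fderiv_Wbar_apply y (Pi.single 0 1)
  have h1 := fderiv_Wbar_apply y (Pi.single 1 1)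
  have h2 := fderiv_Wbar_apply y (Pi.single 2 1)
  simp only [Pi.single_apply, Fin.reduceEq, if_true, if_false] at h0 h1 h2
  apply mul_left_cancel₀ hD
  unfold pdS
  linear_combination (3 / 2 * y 0 + Wbar y) * h0 + 1 / 2 * y 1 * h1 + 1 / 2 * y 2 * h2
    - 3 / 2 * Wbar_cubic y
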